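/- arXiv:2103.11469 — 2 statements merged into one kernel-verified Lean document; each statement's English description precedes it below -/
import Mathlib

section
/- Let w ≥ 1 and z ≥ 2 be integers. Consider a sample tree of capacity k ≥ 1 and width w in which every sample (partition) of every internal node has split size lying in the interval [2, z]. Then the number P of distinct district plans admitted by the tree satisfies w^((k-1)/(z-1)) ≤ P ≤ w^(k-1), where the exponents are real numbers. -/
/-!
Induct on the tree. The children of a sample of split size `s` at a node of capacity `k` have
capacities summing to `k`, so by induction the product of their plan counts lies between
`w ^ ((k - s) / (z - 1))` and `w ^ (k - s)`. As `2 ≤ s ≤ z`, this is at least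
`w ^ ((k - 1) / (z - 1) - 1)` and at most `w ^ (k - 2)`, and summing over the `w` samples
restores the missing factor `w`.
-/

/-- `SampleTreeCount w z k P` asserts that there exists a sample tree of capacity `k` and
width `w`, in which every sample (partition) of every internal node has split size lying in
the interval `[2, z]`, that admits exactly `P` distinct district plans.

A sample tree of capacity `s` and width `w` is defined recursively: if `s = 1` it is a leaf
(admitting exactly one plan); if `s > 1` it consists of exactly `w` samples, where each
sample is a finite list of sample trees whose capacities are positive integers summing
to `s` and whose length (the split size) is at least `2` (here also at most `z`).
The number of distinct plans of an internal node is the sum over its `w` samples of the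
product of the plan counts of the children in that sample.  Each sample `i` is encoded as
a list of pairs `(capacity, plan count)` of its children. -/
inductive SampleTreeCount (w z : ℕ) : ℕ → ℕ → Prop
  | leaf : SampleTreeCount w z 1 1
  | node (k : ℕ) (samples : Fin w → List (ℕ × ℕ))
      (hsplit : ∀ i, 2 ≤ (samples i).length ∧ (samples i).length ≤ z)
      (hpos : ∀ i, ∀ p ∈ samples i, 0 < p.1)
      (hsum : ∀ i, ((samples i).map Prod.fst).sum = k)
      (hchild : ∀ i, ∀ p ∈ samples i, SampleTreeCount w z p.1 p.2) :
      SampleTreeCount w z k (∑ i : Fin w, ((samples i).map Prod.snd).prod)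

namespace Real

variable {α : Type*} {b : ℝ}

lemma rpow_list_sum_le_prod (hb : 0 < b) (e x : α → ℝ) (l : List α)
    (h : ∀ a ∈ l, b ^ e a ≤ x a) : b ^ (l.map e).sum ≤ (l.map x).prod := by
  induction l with
  | nil => simp
  | cons a l ih =>
    have ha := h a List.mem_cons_self
    rw [List.map_cons, List.map_cons, List.sum_cons, List.prod_cons, rpow_add hb]
    exact mul_le_mul ha (ih fun a ha => h a (List.mem_cons_of_mem _ ha))
      (rpow_nonneg hb.le _) ((rpow_nonneg hb.le _).trans ha)

lemma list_prod_le_rpow_sum (hb : 0 < b) (e x : α → ℝ) (l : List α)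
    (h : ∀ a ∈ l, 0 ≤ x a ∧ x a ≤ b ^ e a) : (l.map x).prod ≤ b ^ (l.map e).sum := by
  induction l with
  | nil => simp
  | cons a l ih =>
    have ha := h a List.mem_cons_self
    rw [List.map_cons, List.map_cons, List.sum_cons, List.prod_cons, rpow_add hb]
    exact mul_le_mul ha.2 (ih fun a ha => h a (List.mem_cons_of_mem _ ha))
      (List.prod_nonneg fun y hy => by
        obtain ⟨a, ha, rfl⟩ := List.mem_map.1 hy
        exact (h a (List.mem_cons_of_mem _ ha)).1)
      (rpow_nonneg hb.le _)

end Real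

lemma List.sum_map_natCast_fst_sub_one_div (l : List (ℕ × ℕ)) (d : ℝ) :
    (l.map fun p => ((p.1 : ℝ) - 1) / d).sum = (((l.map Prod.fst).sum : ℝ) - l.length) / d := by
  induction l with
  | nil => simp
  | cons p l ih => simp only [map_cons, sum_cons, ih, length_cons]; push_cast; ring

lemma List.natCast_prod_map_snd (l : List (ℕ × ℕ)) :
    (((l.map Prod.snd).prod : ℕ) : ℝ) = (l.map fun p => (p.2 : ℝ)).prod := by
  rw [Nat.cast_list_prod, List.map_map]; rfl

lemma rpow_div_sub_one_le_sample_prod {b : ℝ} {z k : ℕ} (hb : 1 ≤ b) (l : List (ℕ × ℕ))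
    (hsum : (l.map Prod.fst).sum = k) (hlen : 2 ≤ l.length ∧ l.length ≤ z)
    (h : ∀ p ∈ l, b ^ (((p.1 : ℝ) - 1) / ((z : ℝ) - 1)) ≤ p.2) :
    b ^ (((k : ℝ) - 1) / ((z : ℝ) - 1) - 1) ≤ (((l.map Prod.snd).prod : ℕ) : ℝ) := by
  have hprod := Real.rpow_list_sum_le_prod (by linarith)
    (fun p => ((p.1 : ℝ) - 1) / ((z : ℝ) - 1)) (fun p => (p.2 : ℝ)) l h
  rw [List.sum_map_natCast_fst_sub_one_div, hsum, ← List.natCast_prod_map_snd] at hprod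
  refine (Real.rpow_le_rpow_of_exponent_le hb ?_).trans hprod
  have hlen' : (2 : ℝ) ≤ l.length ∧ (l.length : ℝ) ≤ z := by exact_mod_cast hlen
  rw [div_sub_one (by linarith), div_le_div_iff_of_pos_right (by linarith)]
  linarith

lemma sample_prod_le_rpow_sub_two {b : ℝ} {k : ℕ} (hb : 1 ≤ b) (l : List (ℕ × ℕ))
    (hsum : (l.map Prod.fst).sum = k) (hlen : 2 ≤ l.length)
    (h : ∀ p ∈ l, (p.2 : ℝ) ≤ b ^ ((p.1 : ℝ) - 1)) :
    (((l.map Prod.snd).prod : ℕ) : ℝ) ≤ b ^ ((k : ℝ) - 2) := by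
  have hprod := Real.list_prod_le_rpow_sum (by linarith)
    (fun p => ((p.1 : ℝ) - 1) / 1) (fun p => (p.2 : ℝ)) l
    (fun p hp => ⟨Nat.cast_nonneg _, by simpa using h p hp⟩)
  rw [List.sum_map_natCast_fst_sub_one_div, hsum, ← List.natCast_prod_map_snd, div_one] at hprod
  refine hprod.trans (Real.rpow_le_rpow_of_exponent_le hb ?_)
  have hlen' : (2 : ℝ) ≤ l.length := by exact_mod_cast hlen
  linarith

lemma rpow_le_sum_of_rpow_sub_one_le {w : ℕ} (hw : 0 < w) {e : ℝ} (x : Fin w → ℝ)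
    (h : ∀ i, (w : ℝ) ^ (e - 1) ≤ x i) : (w : ℝ) ^ e ≤ ∑ i, x i := by
  have hsum := Finset.card_nsmul_le_sum Finset.univ x _ fun i _ => h i
  rwa [Finset.card_univ, Fintype.card_fin, nsmul_eq_mul, Real.rpow_sub_one (by positivity),
    mul_div_cancel₀ _ (by positivity)] at hsum

lemma sum_le_rpow_of_le_rpow_sub_one {w : ℕ} (hw : 0 < w) {e : ℝ} (x : Fin w → ℝ)
    (h : ∀ i, x i ≤ (w : ℝ) ^ (e - 1)) : ∑ i, x i ≤ (w : ℝ) ^ e := by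
  have hsum := Finset.sum_le_card_nsmul Finset.univ x _ fun i _ => h i
  rwa [Finset.card_univ, Fintype.card_fin, nsmul_eq_mul, Real.rpow_sub_one (by positivity),
    mul_div_cancel₀ _ (by positivity)] at hsum

theorem sampleTree_plan_count_bounds_general (w z k P : ℕ) (hw : 1 ≤ w)
    (h : SampleTreeCount w z k P) :
    (w : ℝ) ^ (((k : ℝ) - 1) / ((z : ℝ) - 1)) ≤ (P : ℝ) ∧
      (P : ℝ) ≤ (w : ℝ) ^ ((k : ℝ) - 1) := by
  have hw' : (1 : ℝ) ≤ w := by exact_mod_cast hw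
  induction h with
  | leaf => simp
  | node k samples hsplit _ hsum _ ih =>
    rw [Nat.cast_sum]
    constructor
    · refine rpow_le_sum_of_rpow_sub_one_le hw _ fun i => ?_
      exact rpow_div_sub_one_le_sample_prod hw' _ (hsum i) (hsplit i) fun p hp => (ih i p hp).1
    · refine sum_le_rpow_of_le_rpow_sub_one hw _ fun i => ?_
      rw [sub_sub, one_add_one_eq_two]
      exact sample_prod_le_rpow_sub_two hw' _ (hsum i) (hsplit i).1 fun p hp => (ih i p hp).2

/-- **Plan-count bounds for a sample tree.**  Let `w ≥ 1` and `z ≥ 2` be integers.  For a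
sample tree of capacity `k ≥ 1` and width `w`, in which every sample of every internal node
has split size in `[2, z]`, the number `P` of distinct district plans admitted by the tree
satisfies `w ^ ((k - 1) / (z - 1)) ≤ P ≤ w ^ (k - 1)`, where the exponents are real. -/
theorem sampleTree_plan_count_bounds (w z k P : ℕ) (hw : 1 ≤ w) (hz : 2 ≤ z) (hk : 1 ≤ k)
    (h : SampleTreeCount w z k P) :
    (w : ℝ) ^ (((k : ℝ) - 1) / ((z : ℝ) - 1)) ≤ (P : ℝ) ∧
      (P : ℝ) ≤ (w : ℝ) ^ ((k : ℝ) - 1) :=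
  sampleTree_plan_count_bounds_general w z k P hw h
end

section
/- Let G be a simple graph on a finite vertex set, let i be a vertex, and let D be a set of vertices with i ∈ D. Suppose that for every vertex j ∈ D with j ≠ i there exists a vertex k ∈ D adjacent to j in G such that dist_G(i, k) < dist_G(i, j), where dist_G denotes shortest-path (graph) distance and every j ∈ D is reachable from i in G. Then the subgraph of G induced on D is connected. -/
/-!
Following closer neighbours from any `j ∈ D` stays inside `D` and strictly decreases the
distance to `i`, so it must end at `i`; hence every vertex of `D` is joined to `i` by a walk
in the induced subgraph.
-/

namespace SimpleGraph

theorem induce_reachable_of_forall_exists_adj_lt {V α : Type*} [Preorder α] [WellFoundedLT α]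
    (G : SimpleGraph V) {D : Set V} (f : V → α) {i : V} (hi : i ∈ D)
    (hdesc : ∀ j ∈ D, j ≠ i → ∃ k ∈ D, G.Adj j k ∧ f k < f j) {j : V} (hj : j ∈ D) :
    (G.induce D).Reachable ⟨i, hi⟩ ⟨j, hj⟩ := by
  induction j using (InvImage.wf f wellFounded_lt).induction with
  | h j ih =>
    by_cases hji : j = i
    · subst hji
      rfl
    obtain ⟨k, hk, hadj, hlt⟩ := hdesc j hj hji
    exact (ih k hlt hk).trans (Adj.reachable hadj.symm)

end SimpleGraph

theorem induce_connected_of_closer_neighbor_general {V : Type*}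
    (G : SimpleGraph V) (i : V) (D : Set V) (hi : i ∈ D)
    (hcloser : ∀ j ∈ D, j ≠ i → ∃ k ∈ D, G.Adj j k ∧ G.dist i k < G.dist i j) :
    (G.induce D).Connected :=
  (G.induce D).connected_iff_exists_forall_reachable.2
    ⟨⟨i, hi⟩, fun ⟨_, hj⟩ => G.induce_reachable_of_forall_exists_adj_lt (G.dist i) hi hcloser hj⟩

/-- **Correctness of the shortest-path-tree contiguity constraints.**  Let `G` be a simple
graph on a finite vertex set, `i` a vertex, and `D` a set of vertices containing `i` such
that every `j ∈ D` is reachable from `i`.  If every `j ∈ D` other than `i` has some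
neighbor `k ∈ D` strictly closer to `i` in shortest-path distance, then the subgraph of
`G` induced on `D` is connected. -/
theorem induce_connected_of_closer_neighbor {V : Type*} [Fintype V]
    (G : SimpleGraph V) (i : V) (D : Set V) (hi : i ∈ D)
    (hreach : ∀ j ∈ D, G.Reachable i j)
    (hcloser : ∀ j ∈ D, j ≠ i → ∃ k ∈ D, G.Adj j k ∧ G.dist i k < G.dist i j) :
    (G.induce D).Connected :=
  induce_connected_of_closer_neighbor_general G i D hi hcloser
end
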